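/- arXiv:1909.12570 — 4 statements merged into one kernel-verified Lean document; each statement's English description precedes it below -/
import Mathlib

section
/- Let A be a symmetric invertible p_γ × p_γ real matrix, B a p_γ × p_θ real matrix, and C a symmetric p_θ × p_θ real matrix, and let Ĩ = fromBlocks A B Bᵀ C. Fix vectors γ̂, θ, θ̂ with μ_γ = γ̂ + A⁻¹ B (θ̂ − θ). Let γ be a random vector in ℝ^{p_γ} with square-integrable components, mean μ_γ, and covariance matrix A⁻¹, and let β = (γ, θ), β̂ = (γ̂, θ̂) be the stacked vectors. Then E[(β − β̂)ᵀ Ĩ (β − β̂)] = (θ − θ̂)ᵀ (C − Bᵀ A⁻¹ B) (θ − θ̂) + p_γ. -/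
/-!
Completing the square in the `γ`-block (Schur complement of `A`) writes the quadratic form as
`(γ - μγ)ᵀ A (γ - μγ) + (θ - θ̂)ᵀ (C - Bᵀ A⁻¹ B) (θ - θ̂)`, since `γ - γ̂ + A⁻¹ B (θ - θ̂) = γ - μγ`.
Only the first term is random, and its expectation is `∑ i j, A i j * A⁻¹ i j = tr (A A⁻¹) = p_γ`.
-/

open MeasureTheory Matrix

lemma dotProduct_mulVec_self_eq_sum {n R : Type*} [Fintype n] [CommSemiring R]
    (M : Matrix n n R) (x : n → R) :
    x ⬝ᵥ M *ᵥ x = ∑ i, ∑ j, M i j * (x i * x j) := by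
  simp only [dotProduct, mulVec, Finset.mul_sum]
  exact Finset.sum_congr rfl fun i _ => Finset.sum_congr rfl fun j _ => by ring

lemma sum_sum_mul_eq_trace_transpose_mul {n R : Type*} [Fintype n] [CommSemiring R]
    (M N : Matrix n n R) :
    ∑ i, ∑ j, M i j * N i j = trace (Mᵀ * N) := by
  simp only [trace, diag, mul_apply, transpose_apply]
  exact Finset.sum_comm

lemma schur_complement_eq₁₁_of_isSymm {m n R : Type*} [Fintype m] [DecidableEq m] [Fintype n]
    [CommRing R] [StarRing R] [TrivialStar R] {A : Matrix m m R} [Invertible A] (hA : A.IsSymm)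
    (B : Matrix m n R) (D : Matrix n n R) (x : m → R) (y : n → R) :
    (x ⊕ᵥ y) ⬝ᵥ fromBlocks A B Bᵀ D *ᵥ (x ⊕ᵥ y) =
      (x + (A⁻¹ * B) *ᵥ y) ⬝ᵥ A *ᵥ (x + (A⁻¹ * B) *ᵥ y) + y ⬝ᵥ (D - Bᵀ * A⁻¹ * B) *ᵥ y := by
  have hA' : A.IsHermitian := by rw [IsHermitian, conjTranspose_eq_transpose_of_trivial]; exact hA
  simpa only [star_trivial, conjTranspose_eq_transpose_of_trivial, ← dotProduct_mulVec]
    using schur_complement_eq₁₁ B D x y hA'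

section RandomQuadraticForm

variable {Ω n : Type*} [MeasurableSpace Ω] {P : Measure Ω} [Fintype n] {X : Ω → n → ℝ}

lemma integrable_dotProduct_mulVec_self (hX : ∀ i, MemLp (fun ω => X ω i) 2 P)
    (M : Matrix n n ℝ) : Integrable (fun ω => X ω ⬝ᵥ M *ᵥ X ω) P := by
  simp only [dotProduct_mulVec_self_eq_sum]
  exact integrable_finsetSum _ fun i _ => integrable_finsetSum _ fun j _ =>
    ((hX i).integrable_mul (hX j)).const_mul _

lemma integral_dotProduct_mulVec_self (hX : ∀ i, MemLp (fun ω => X ω i) 2 P)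
    (M : Matrix n n ℝ) :
    ∫ ω, X ω ⬝ᵥ M *ᵥ X ω ∂P = ∑ i, ∑ j, M i j * ∫ ω, X ω i * X ω j ∂P := by
  have hprod : ∀ i j, Integrable (fun ω => M i j * (X ω i * X ω j)) P := fun i j =>
    ((hX i).integrable_mul (hX j)).const_mul _
  simp only [dotProduct_mulVec_self_eq_sum]
  rw [integral_finsetSum _ fun i _ => integrable_finsetSum _ fun j _ => hprod i j]
  refine Finset.sum_congr rfl fun i _ => ?_
  rw [integral_finsetSum _ fun j _ => hprod i j]
  exact Finset.sum_congr rfl fun j _ => integral_const_mul _ _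

end RandomQuadraticForm

theorem expected_block_quadratic_form_self_information_general
    {Ω : Type*} [MeasurableSpace Ω] (P : Measure Ω) [IsProbabilityMeasure P]
    {pγ pθ : ℕ}
    (A : Matrix (Fin pγ) (Fin pγ) ℝ) (hA : A.IsSymm) (hAdet : IsUnit A.det)
    (B : Matrix (Fin pγ) (Fin pθ) ℝ)
    (C : Matrix (Fin pθ) (Fin pθ) ℝ)
    (γhat : Fin pγ → ℝ) (θ θhat : Fin pθ → ℝ)
    (μγ : Fin pγ → ℝ) (hμγ : μγ = γhat + A⁻¹.mulVec (B.mulVec (θhat - θ)))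
    (γ : Ω → (Fin pγ → ℝ))
    (hγL2 : ∀ i, MemLp (fun ω => γ ω i) 2 P)
    (hcov : ∀ i j, ∫ ω, (γ ω i - μγ i) * (γ ω j - μγ j) ∂P = A⁻¹ i j) :
    ∫ ω, (Sum.elim (γ ω) θ - Sum.elim γhat θhat) ⬝ᵥ
        (Matrix.fromBlocks A B Bᵀ C).mulVec (Sum.elim (γ ω) θ - Sum.elim γhat θhat) ∂P
      = (θ - θhat) ⬝ᵥ (C - Bᵀ * A⁻¹ * B).mulVec (θ - θhat) + pγ := by
  have : Invertible A := invertibleOfIsUnitDet A hAdet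
  have hblocks : ∀ ω, Sum.elim (γ ω) θ - Sum.elim γhat θhat = (γ ω - γhat) ⊕ᵥ (θ - θhat) := by
    intro ω; funext s; cases s <;> rfl
  have hcenter : ∀ ω, γ ω - γhat + (A⁻¹ * B) *ᵥ (θ - θhat) = γ ω - μγ := by
    intro ω
    rw [hμγ, ← mulVec_mulVec, ← neg_sub θ θhat, mulVec_neg, mulVec_neg]
    abel
  have hdev : ∀ i, MemLp (fun ω => (γ ω - μγ) i) 2 P := fun i => (hγL2 i).sub (memLp_const _)
  simp_rw [hblocks, schur_complement_eq₁₁_of_isSymm hA, hcenter]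
  rw [integral_add (integrable_dotProduct_mulVec_self hdev A) (integrable_const _),
    integral_dotProduct_mulVec_self hdev A]
  simp only [Pi.sub_apply, hcov, integral_const, probReal_univ, one_smul]
  rw [sum_sum_mul_eq_trace_transpose_mul, hA.eq, mul_nonsing_inv _ hAdet, trace_one,
    Fintype.card_fin, add_comm]

/-- Equation (si1) of Section SM3: the inner conditional expectation of the
approximate self-information loss quadratic form,
E[(β − β̂)ᵀ Ĩ (β − β̂)] = (θ − θ̂)ᵀ (C − Bᵀ A⁻¹ B) (θ − θ̂) + p_γ. -/
theorem expected_block_quadratic_form_self_information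
    {Ω : Type*} [MeasurableSpace Ω] (P : Measure Ω) [IsProbabilityMeasure P]
    {pγ pθ : ℕ}
    (A : Matrix (Fin pγ) (Fin pγ) ℝ) (hA : A.IsSymm) (hAdet : IsUnit A.det)
    (B : Matrix (Fin pγ) (Fin pθ) ℝ)
    (C : Matrix (Fin pθ) (Fin pθ) ℝ) (hC : C.IsSymm)
    (γhat : Fin pγ → ℝ) (θ θhat : Fin pθ → ℝ)
    (μγ : Fin pγ → ℝ) (hμγ : μγ = γhat + A⁻¹.mulVec (B.mulVec (θhat - θ)))
    (γ : Ω → (Fin pγ → ℝ)) (hγmeas : Measurable γ)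
    (hγL2 : ∀ i, MemLp (fun ω => γ ω i) 2 P)
    (hmean : ∀ i, ∫ ω, γ ω i ∂P = μγ i)
    (hcov : ∀ i j, ∫ ω, (γ ω i - μγ i) * (γ ω j - μγ j) ∂P = A⁻¹ i j) :
    ∫ ω, (Sum.elim (γ ω) θ - Sum.elim γhat θhat) ⬝ᵥ
        (Matrix.fromBlocks A B Bᵀ C).mulVec (Sum.elim (γ ω) θ - Sum.elim γhat θhat) ∂P
      = (θ - θhat) ⬝ᵥ (C - Bᵀ * A⁻¹ * B).mulVec (θ - θhat) + pγ :=
  expected_block_quadratic_form_self_information_general P A hA hAdet B C γhat θ θhat μγ hμγ γ hγL2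
    hcov
end

section
/- Let A be a symmetric invertible p_γ × p_γ real matrix, B a p_γ × p_θ real matrix, and C a symmetric p_θ × p_θ real matrix; let Ĩ = fromBlocks A B Bᵀ C, and fix θ ∈ ℝ^{p_θ}. On a probability space, let β̂ = (γ̂, θ̂) be a random vector in ℝ^{p} (p = p_γ + p_θ) with square-integrable components, mean β̃ = (γ̃, θ̃) and covariance matrix K̃ whose θ-block is K̃_{θθ}; let ε be a random vector in ℝ^{p_γ}, independent of β̂, with square-integrable components, mean zero, and covariance matrix A⁻¹; and set γ = γ̂ + A⁻¹ B (θ̂ − θ) + ε, β = (γ, θ). Then E[ (1/2) (β − β̂)ᵀ Ĩ (β − β̂) ] = (1/2) (θ − θ̃)ᵀ T̃⁻¹ (θ − θ̃) + (1/2) tr(T̃⁻¹ K̃_{θθ}) + p_γ/2, where T̃⁻¹ = C − Bᵀ A⁻¹ B. -/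
/-! Write `w = θ - θ̂`. Then `β - β̂ = (ε - A⁻¹ B w, w)`, and completing the square in the block
quadratic form with respect to `A` splits it pointwise as `εᵀ A ε + wᵀ T̃⁻¹ w`, with no cross
term. Taking expectations, `E[εᵀ A ε] = tr (A A⁻¹) = p_γ`, while `w` has mean `θ - θ̃` and
covariance `K̃_θθ`, so `E[wᵀ T̃⁻¹ w] = (θ - θ̃)ᵀ T̃⁻¹ (θ - θ̃) + tr (T̃⁻¹ K̃_θθ)`. -/

open MeasureTheory ProbabilityTheory Matrix

namespace Matrix

variable {m n R : Type*} [Fintype m] [Fintype n] [CommRing R]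

theorem dotProduct_fromBlocks_mulVec_eq_schur [DecidableEq m] {A : Matrix m m R} (hA : A.IsSymm)
    (hAdet : IsUnit A.det) (B : Matrix m n R) (D : Matrix n n R) (x : m → R) (y : n → R) :
    Sum.elim x y ⬝ᵥ fromBlocks A B Bᵀ D *ᵥ Sum.elim x y
      = (x + (A⁻¹ * B) *ᵥ y) ⬝ᵥ A *ᵥ (x + (A⁻¹ * B) *ᵥ y)
        + y ⬝ᵥ (D - Bᵀ * A⁻¹ * B) *ᵥ y := by
  set z := (A⁻¹ * B) *ᵥ y
  have hAz : A *ᵥ z = B *ᵥ y := by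
    rw [mulVec_mulVec, ← Matrix.mul_assoc, mul_nonsing_inv A hAdet, Matrix.one_mul]
  have hzAx : z ⬝ᵥ A *ᵥ x = x ⬝ᵥ B *ᵥ y := by
    rw [dotProduct_mulVec, ← mulVec_transpose, hA.eq, dotProduct_comm, hAz]
  have hyBz : y ⬝ᵥ (Bᵀ * A⁻¹ * B) *ᵥ y = z ⬝ᵥ B *ᵥ y := by
    rw [Matrix.mul_assoc, ← mulVec_mulVec, dotProduct_mulVec, vecMul_transpose, dotProduct_comm]
  rw [fromBlocks_mulVec, sumElim_dotProduct_sumElim, mulVec_add, hAz]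
  simp only [Sum.elim_comp_inl, Sum.elim_comp_inr, dotProduct_add, add_dotProduct, sub_mulVec,
    dotProduct_sub, hzAx, hyBz, dotProduct_mulVec _ Bᵀ, vecMul_transpose, dotProduct_comm (B *ᵥ y)]
  abel

theorem dotProduct_mulVec_eq_sum_sum (M : Matrix m m R) (x : m → R) :
    x ⬝ᵥ M *ᵥ x = ∑ i, ∑ j, M i j * (x i * x j) := by
  simp only [dotProduct, mulVec, Finset.mul_sum]
  exact Finset.sum_congr rfl fun i _ => Finset.sum_congr rfl fun j _ => by ring

end Matrix

section QuadraticForm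

variable {Ω ι : Type*} [MeasurableSpace Ω] {P : Measure Ω} [Fintype ι]
  {v : Ω → ι → ℝ}

theorem integrable_dotProduct_mulVec (M : Matrix ι ι ℝ)
    (hv : ∀ i, MemLp (fun ω => v ω i) 2 P) :
    Integrable (fun ω => v ω ⬝ᵥ M *ᵥ v ω) P := by
  simp only [dotProduct_mulVec_eq_sum_sum]
  exact integrable_finsetSum _ fun i _ => integrable_finsetSum _ fun j _ =>
    ((hv i).integrable_mul (hv j)).const_mul _

theorem integral_dotProduct_mulVec_of_integral_mul (M : Matrix ι ι ℝ)
    (hv : ∀ i, MemLp (fun ω => v ω i) 2 P) {S : Matrix ι ι ℝ}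
    (hS : ∀ i j, ∫ ω, v ω i * v ω j ∂P = S i j) :
    ∫ ω, v ω ⬝ᵥ M *ᵥ v ω ∂P = (M * S).trace := by
  have hint : ∀ i j, Integrable (fun ω => M i j * (v ω i * v ω j)) P := fun i j =>
    ((hv i).integrable_mul (hv j)).const_mul _
  simp only [dotProduct_mulVec_eq_sum_sum]
  rw [integral_finsetSum _ fun i _ => integrable_finsetSum _ fun j _ => hint i j]
  simp only [integral_finsetSum _ fun j _ => hint _ j, integral_const_mul, hS, trace, diag,
    mul_apply]
  refine Finset.sum_congr rfl fun i _ => Finset.sum_congr rfl fun j _ => ?_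
  rw [← hS, ← hS j i]
  simp only [mul_comm (v _ i)]

theorem integral_dotProduct_mulVec [IsProbabilityMeasure P] (M : Matrix ι ι ℝ)
    (hv : ∀ i, MemLp (fun ω => v ω i) 2 P) {μ : ι → ℝ} (hμ : ∀ i, ∫ ω, v ω i ∂P = μ i)
    {K : Matrix ι ι ℝ} (hK : ∀ i j, ∫ ω, (v ω i - μ i) * (v ω j - μ j) ∂P = K i j) :
    ∫ ω, v ω ⬝ᵥ M *ᵥ v ω ∂P = μ ⬝ᵥ M *ᵥ μ + (M * K).trace := by
  have hS : ∀ i j, ∫ ω, v ω i * v ω j ∂P = (K + vecMulVec μ μ) i j := by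
    intro i j
    have := covariance_eq_sub (hv i) (hv j)
    simp only [covariance, hμ, hK, Pi.mul_apply] at this
    rw [Matrix.add_apply, vecMulVec_apply, this]
    ring
  rw [integral_dotProduct_mulVec_of_integral_mul M hv hS, Matrix.mul_add, trace_add,
    mul_vecMulVec, trace_vecMulVec, dotProduct_comm, add_comm]

theorem integral_sub_dotProduct_mulVec [IsProbabilityMeasure P] (M : Matrix ι ι ℝ)
    (hv : ∀ i, MemLp (fun ω => v ω i) 2 P) {μ : ι → ℝ} (hμ : ∀ i, ∫ ω, v ω i ∂P = μ i)
    {K : Matrix ι ι ℝ} (hK : ∀ i j, ∫ ω, (v ω i - μ i) * (v ω j - μ j) ∂P = K i j)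
    (c : ι → ℝ) :
    ∫ ω, (c - v ω) ⬝ᵥ M *ᵥ (c - v ω) ∂P = (c - μ) ⬝ᵥ M *ᵥ (c - μ) + (M * K).trace := by
  refine integral_dotProduct_mulVec (v := fun ω => c - v ω) M
    (fun i => (memLp_const (c i)).sub (hv i)) (fun i => ?_) (fun i j => ?_)
  · simp only [Pi.sub_apply]
    rw [integral_sub (integrable_const _) ((hv i).integrable one_le_two), integral_const, hμ,
      probReal_univ, one_smul]
  · rw [← hK]
    congr 1 with ω
    simp only [Pi.sub_apply]
    ring

end QuadraticForm

theorem expected_generator_self_information_general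
    {Ω : Type*} [MeasurableSpace Ω] (P : Measure Ω) [IsProbabilityMeasure P]
    {pγ pθ : ℕ}
    (A : Matrix (Fin pγ) (Fin pγ) ℝ) (hA : A.IsSymm) (hAdet : IsUnit A.det)
    (B : Matrix (Fin pγ) (Fin pθ) ℝ)
    (C : Matrix (Fin pθ) (Fin pθ) ℝ)
    (θ : Fin pθ → ℝ)
    (βhat : Ω → (Fin pγ ⊕ Fin pθ → ℝ))
    (hβhatL2 : ∀ i, MemLp (fun ω => βhat ω i) 2 P)
    (γtilde : Fin pγ → ℝ) (θtilde : Fin pθ → ℝ)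
    (hβhatMean : ∀ i, ∫ ω, βhat ω i ∂P = Sum.elim γtilde θtilde i)
    (Ktilde : Matrix (Fin pγ ⊕ Fin pθ) (Fin pγ ⊕ Fin pθ) ℝ)
    (hβhatCov : ∀ i j, ∫ ω, (βhat ω i - Sum.elim γtilde θtilde i)
        * (βhat ω j - Sum.elim γtilde θtilde j) ∂P = Ktilde i j)
    (ε : Ω → (Fin pγ → ℝ))
    (hεL2 : ∀ i, MemLp (fun ω => ε ω i) 2 P)
    (hεCov : ∀ i j, ∫ ω, ε ω i * ε ω j ∂P = A⁻¹ i j)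
    (γ : Ω → (Fin pγ → ℝ))
    (hγ : ∀ ω, γ ω = (fun i => βhat ω (Sum.inl i))
        + A⁻¹.mulVec (B.mulVec ((fun j => βhat ω (Sum.inr j)) - θ)) + ε ω) :
    ∫ ω, (1/2 : ℝ) * ((Sum.elim (γ ω) θ - βhat ω) ⬝ᵥ
        (Matrix.fromBlocks A B Bᵀ C).mulVec (Sum.elim (γ ω) θ - βhat ω)) ∂P
      = (1/2 : ℝ) * ((θ - θtilde) ⬝ᵥ (C - Bᵀ * A⁻¹ * B).mulVec (θ - θtilde))
        + (1/2 : ℝ) * ((C - Bᵀ * A⁻¹ * B) * Ktilde.toBlocks₂₂).trace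
        + (pγ : ℝ) / 2 := by
  set S := C - Bᵀ * A⁻¹ * B
  set θhat : Ω → Fin pθ → ℝ := fun ω j => βhat ω (Sum.inr j)
  have hθhatL2 : ∀ j, MemLp (fun ω => θhat ω j) 2 P := fun j => hβhatL2 (Sum.inr j)
  have hsplit : ∀ ω, (Sum.elim (γ ω) θ - βhat ω) ⬝ᵥ fromBlocks A B Bᵀ C *ᵥ
      (Sum.elim (γ ω) θ - βhat ω) = ε ω ⬝ᵥ A *ᵥ ε ω + (θ - θhat ω) ⬝ᵥ S *ᵥ (θ - θhat ω) := by
    intro ω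
    have hδ : Sum.elim (γ ω) θ - βhat ω
        = Sum.elim (ε ω - (A⁻¹ * B) *ᵥ (θ - θhat ω)) (θ - θhat ω) := by
      ext (i | j)
      · simp only [Pi.sub_apply, Sum.elim_inl, hγ, ← mulVec_mulVec, ← neg_sub θ, mulVec_neg,
          Pi.add_apply, Pi.neg_apply]
        ring
      · rfl
    rw [hδ, dotProduct_fromBlocks_mulVec_eq_schur hA hAdet, sub_add_cancel]
  have hεA : ∫ ω, ε ω ⬝ᵥ A *ᵥ ε ω ∂P = pγ := by
    rw [integral_dotProduct_mulVec_of_integral_mul A hεL2 hεCov, mul_nonsing_inv A hAdet,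
      trace_one, Fintype.card_fin]
  have hθInt : Integrable (fun ω => (θ - θhat ω) ⬝ᵥ S *ᵥ (θ - θhat ω)) P :=
    integrable_dotProduct_mulVec S fun j => (memLp_const (θ j)).sub (hθhatL2 j)
  simp only [hsplit]
  rw [integral_const_mul, integral_add (integrable_dotProduct_mulVec A hεL2) hθInt, hεA,
    integral_sub_dotProduct_mulVec (μ := θtilde) (K := Ktilde.toBlocks₂₂) S hθhatL2
      (fun j => hβhatMean (Sum.inr j)) (fun i j => hβhatCov (Sum.inr i) (Sum.inr j))]
  ring

/-- The generator self-information entry of Table 2 (non-constant part):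
E[(1/2)(β − β̂)ᵀ Ĩ (β − β̂)]
  = (1/2)(θ − θ̃)ᵀ T̃⁻¹ (θ − θ̃) + (1/2) tr(T̃⁻¹ K̃_{θθ}) + p_γ/2,
where Ĩ = fromBlocks A B Bᵀ C, T̃⁻¹ = C − Bᵀ A⁻¹ B is the Schur complement,
β̂ = (γ̂, θ̂) has mean β̃ = (γ̃, θ̃) and covariance K̃, and
γ = γ̂ + A⁻¹ B (θ̂ − θ) + ε with ε independent of β̂, mean 0, covariance A⁻¹. -/
theorem expected_generator_self_information
    {Ω : Type*} [MeasurableSpace Ω] (P : Measure Ω) [IsProbabilityMeasure P]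
    {pγ pθ : ℕ}
    (A : Matrix (Fin pγ) (Fin pγ) ℝ) (hA : A.IsSymm) (hAdet : IsUnit A.det)
    (B : Matrix (Fin pγ) (Fin pθ) ℝ)
    (C : Matrix (Fin pθ) (Fin pθ) ℝ) (hC : C.IsSymm)
    (θ : Fin pθ → ℝ)
    (βhat : Ω → (Fin pγ ⊕ Fin pθ → ℝ)) (hβhatMeas : Measurable βhat)
    (hβhatL2 : ∀ i, MemLp (fun ω => βhat ω i) 2 P)
    (γtilde : Fin pγ → ℝ) (θtilde : Fin pθ → ℝ)
    (hβhatMean : ∀ i, ∫ ω, βhat ω i ∂P = Sum.elim γtilde θtilde i)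
    (Ktilde : Matrix (Fin pγ ⊕ Fin pθ) (Fin pγ ⊕ Fin pθ) ℝ)
    (hβhatCov : ∀ i j, ∫ ω, (βhat ω i - Sum.elim γtilde θtilde i)
        * (βhat ω j - Sum.elim γtilde θtilde j) ∂P = Ktilde i j)
    (ε : Ω → (Fin pγ → ℝ)) (hεMeas : Measurable ε)
    (hεL2 : ∀ i, MemLp (fun ω => ε ω i) 2 P)
    (hεMean : ∀ i, ∫ ω, ε ω i ∂P = 0)
    (hεCov : ∀ i j, ∫ ω, ε ω i * ε ω j ∂P = A⁻¹ i j)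
    (hIndep : IndepFun βhat ε P)
    (γ : Ω → (Fin pγ → ℝ))
    (hγ : ∀ ω, γ ω = (fun i => βhat ω (Sum.inl i))
        + A⁻¹.mulVec (B.mulVec ((fun j => βhat ω (Sum.inr j)) - θ)) + ε ω) :
    ∫ ω, (1/2 : ℝ) * ((Sum.elim (γ ω) θ - βhat ω) ⬝ᵥ
        (Matrix.fromBlocks A B Bᵀ C).mulVec (Sum.elim (γ ω) θ - βhat ω)) ∂P
      = (1/2 : ℝ) * ((θ - θtilde) ⬝ᵥ (C - Bᵀ * A⁻¹ * B).mulVec (θ - θtilde))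
        + (1/2 : ℝ) * ((C - Bᵀ * A⁻¹ * B) * Ktilde.toBlocks₂₂).trace
        + (pγ : ℝ) / 2 :=
  expected_generator_self_information_general P A hA hAdet B C θ βhat hβhatL2 γtilde θtilde
    hβhatMean Ktilde hβhatCov ε hεL2 hεCov γ hγ
end

section
/- Let A be a symmetric invertible p_γ × p_γ real matrix and B a p_γ × p_θ real matrix; fix θ ∈ ℝ^{p_θ}. On a probability space, let β̂ = (γ̂, θ̂) be a random vector in ℝ^{p} (p = p_γ + p_θ) with square-integrable components, mean β̃ = (γ̃, θ̃) and covariance matrix whose θ-block is K̃_{θθ}; let ε be a random vector in ℝ^{p_γ}, independent of β̂, with square-integrable components, mean zero, and covariance matrix A⁻¹; and set γ = γ̂ + A⁻¹ B (θ̂ − θ) + ε, β = (γ, θ). Then E[ ‖β − β̂‖² ] = (θ − θ̃)ᵀ S (θ − θ̃) + tr(A⁻¹) + tr(S K̃_{θθ}), where S = I_{p_θ} + Bᵀ A⁻¹ A⁻¹ B and ‖·‖ denotes the Euclidean norm on ℝ^p. -/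
/-!
Put δ = θ − θ̂ and M = A⁻¹B, so that β − β̂ = (ε − Mδ, δ) and
‖β − β̂‖² = εᵀε − 2 εᵀMδ + δᵀ(I + MᵀM)δ, where I + MᵀM = S because A is symmetric.
Each term is a bilinear form in square-integrable random vectors. The cross term has mean zero
because ε is centred and independent of β̂, and a quadratic form xᵀSx in a random vector with
mean m and covariance K has mean mᵀSm + tr(SK). Here δ has mean θ − θ̃ and covariance K̃_{θθ},
while ε has mean 0 and covariance A⁻¹.
-/

open MeasureTheory ProbabilityTheory Matrix

section BilinearForm

variable {R ι κ : Type*} [CommRing R] [Fintype ι] [Fintype κ]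

theorem dotProduct_mulVec_eq_sum (x : ι → R) (S : Matrix ι κ R) (y : κ → R) :
    x ⬝ᵥ S *ᵥ y = ∑ i, ∑ k, S i k * (x i * y k) := by
  simp only [dotProduct, mulVec, Finset.mul_sum]
  exact Finset.sum_congr rfl fun i _ => Finset.sum_congr rfl fun k _ => by ring

theorem sub_mulVec_dotProduct_sub_mulVec_add [DecidableEq ι] [DecidableEq κ] (u : κ → R)
    (M : Matrix κ ι R) (v : ι → R) :
    (u - M *ᵥ v) ⬝ᵥ (u - M *ᵥ v) + v ⬝ᵥ v
      = u ⬝ᵥ 1 *ᵥ u - 2 * (u ⬝ᵥ M *ᵥ v) + v ⬝ᵥ (1 + Mᵀ * M) *ᵥ v := by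
  simp only [sub_dotProduct, dotProduct_sub, one_mulVec, add_mulVec, dotProduct_add,
    ← mulVec_mulVec, dotProduct_mulVec v Mᵀ, vecMul_transpose, dotProduct_comm (M *ᵥ v) u]
  ring

end BilinearForm

section Moments

variable {Ω ι κ : Type*} [MeasurableSpace Ω] {μ : Measure Ω} [Fintype ι] [Fintype κ]
  {X : Ω → ι → ℝ} {Y : Ω → κ → ℝ}

theorem integrable_dotProduct_mulVec_s7 (hX : ∀ i, MemLp (fun ω => X ω i) 2 μ)
    (hY : ∀ k, MemLp (fun ω => Y ω k) 2 μ) (S : Matrix ι κ ℝ) :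
    Integrable (fun ω => X ω ⬝ᵥ S *ᵥ Y ω) μ := by
  simp_rw [dotProduct_mulVec_eq_sum]
  exact integrable_finsetSum _ fun i _ => integrable_finsetSum _ fun k _ =>
    ((hX i).integrable_mul (hY k)).const_mul _

theorem integral_dotProduct_mulVec_s7 (hX : ∀ i, MemLp (fun ω => X ω i) 2 μ)
    (hY : ∀ k, MemLp (fun ω => Y ω k) 2 μ) (S : Matrix ι κ ℝ) :
    ∫ ω, X ω ⬝ᵥ S *ᵥ Y ω ∂μ = ∑ i, ∑ k, S i k * ∫ ω, X ω i * Y ω k ∂μ := by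
  have hXY : ∀ i k, Integrable (fun ω => X ω i * Y ω k) μ := fun i k =>
    (hX i).integrable_mul (hY k)
  have hrow : ∀ i, Integrable (fun ω => ∑ k, S i k * (X ω i * Y ω k)) μ := fun i =>
    integrable_finsetSum _ fun k _ => (hXY i k).const_mul _
  simp_rw [dotProduct_mulVec_eq_sum]
  rw [integral_finsetSum _ fun i _ => hrow i]
  refine Finset.sum_congr rfl fun i _ => ?_
  rw [integral_finsetSum _ fun k _ => (hXY i k).const_mul _]
  exact Finset.sum_congr rfl fun k _ => integral_const_mul _ _

theorem integral_dotProduct_mulVec_self_s7 [IsProbabilityMeasure μ]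
    (hX : ∀ i, MemLp (fun ω => X ω i) 2 μ) {m : ι → ℝ} (hm : ∀ i, ∫ ω, X ω i ∂μ = m i)
    {K : Matrix ι ι ℝ} (hK : ∀ i j, ∫ ω, (X ω i - m i) * (X ω j - m j) ∂μ = K i j)
    (S : Matrix ι ι ℝ) :
    ∫ ω, X ω ⬝ᵥ S *ᵥ X ω ∂μ = m ⬝ᵥ S *ᵥ m + trace (S * K) := by
  have hsecond : ∀ i j, ∫ ω, X ω i * X ω j ∂μ = K i j + m i * m j := by
    intro i j
    have h := covariance_eq_sub (hX i) (hX j)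
    rw [covariance, hm, hm, hK] at h
    simp only [Pi.mul_apply] at h
    linarith
  have hKsymm : ∀ i j, K j i = K i j := fun i j => by
    rw [← hK, ← hK]
    exact integral_congr_ae (.of_forall fun ω => mul_comm _ _)
  rw [integral_dotProduct_mulVec_s7 hX hX, dotProduct_mulVec_eq_sum, trace]
  simp only [hsecond, diag_apply, mul_apply, hKsymm, mul_add, Finset.sum_add_distrib]
  ring

theorem integral_const_sub_dotProduct_mulVec_self [IsProbabilityMeasure μ]
    (hX : ∀ i, MemLp (fun ω => X ω i) 2 μ) {m : ι → ℝ} (hm : ∀ i, ∫ ω, X ω i ∂μ = m i)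
    {K : Matrix ι ι ℝ} (hK : ∀ i j, ∫ ω, (X ω i - m i) * (X ω j - m j) ∂μ = K i j)
    (c : ι → ℝ) (S : Matrix ι ι ℝ) :
    ∫ ω, (c - X ω) ⬝ᵥ S *ᵥ (c - X ω) ∂μ = (c - m) ⬝ᵥ S *ᵥ (c - m) + trace (S * K) := by
  refine integral_dotProduct_mulVec_self_s7 (X := fun ω => c - X ω)
    (fun i => (memLp_const _).sub (hX i)) (fun i => ?_) (fun i j => ?_) S
  · simp [integral_sub (integrable_const _) ((hX i).integrable one_le_two), hm]
  · rw [← hK]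
    exact integral_congr_ae (.of_forall fun ω => by simp only [Pi.sub_apply]; ring)

theorem ProbabilityTheory.IndepFun.integral_dotProduct_mulVec_eq_zero (hXY : IndepFun X Y μ)
    (hX : ∀ i, MemLp (fun ω => X ω i) 2 μ) (hY : ∀ k, MemLp (fun ω => Y ω k) 2 μ)
    (hX0 : ∀ i, ∫ ω, X ω i ∂μ = 0) (S : Matrix ι κ ℝ) :
    ∫ ω, X ω ⬝ᵥ S *ᵥ Y ω ∂μ = 0 := by
  rw [integral_dotProduct_mulVec_s7 hX hY]
  refine Finset.sum_eq_zero fun i _ => Finset.sum_eq_zero fun k _ => ?_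
  have hXYik : IndepFun (fun ω => X ω i) (fun ω => Y ω k) μ :=
    hXY.comp (measurable_pi_apply i) (measurable_pi_apply k)
  rw [hXYik.integral_fun_mul_eq_mul_integral (hX i).aestronglyMeasurable
    (hY k).aestronglyMeasurable, hX0, zero_mul, mul_zero]

end Moments

theorem expected_generator_squared_error_general
    {Ω : Type*} [MeasurableSpace Ω] (P : Measure Ω) [IsProbabilityMeasure P]
    {pγ pθ : ℕ}
    (A : Matrix (Fin pγ) (Fin pγ) ℝ) (hA : A.IsSymm)
    (B : Matrix (Fin pγ) (Fin pθ) ℝ)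
    (θ : Fin pθ → ℝ)
    (βhat : Ω → (Fin pγ ⊕ Fin pθ → ℝ))
    (hβhatL2 : ∀ i, MemLp (fun ω => βhat ω i) 2 P)
    (γtilde : Fin pγ → ℝ) (θtilde : Fin pθ → ℝ)
    (hβhatMean : ∀ i, ∫ ω, βhat ω i ∂P = Sum.elim γtilde θtilde i)
    (Ktilde : Matrix (Fin pγ ⊕ Fin pθ) (Fin pγ ⊕ Fin pθ) ℝ)
    (hβhatCov : ∀ i j, ∫ ω, (βhat ω i - Sum.elim γtilde θtilde i)
        * (βhat ω j - Sum.elim γtilde θtilde j) ∂P = Ktilde i j)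
    (ε : Ω → (Fin pγ → ℝ))
    (hεL2 : ∀ i, MemLp (fun ω => ε ω i) 2 P)
    (hεMean : ∀ i, ∫ ω, ε ω i ∂P = 0)
    (hεCov : ∀ i j, ∫ ω, ε ω i * ε ω j ∂P = A⁻¹ i j)
    (hIndep : IndepFun βhat ε P)
    (γ : Ω → (Fin pγ → ℝ))
    (hγ : ∀ ω, γ ω = (fun i => βhat ω (Sum.inl i))
        + A⁻¹.mulVec (B.mulVec ((fun j => βhat ω (Sum.inr j)) - θ)) + ε ω) :
    ∫ ω, (Sum.elim (γ ω) θ - βhat ω) ⬝ᵥ (Sum.elim (γ ω) θ - βhat ω) ∂P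
      = (θ - θtilde) ⬝ᵥ
          ((1 : Matrix (Fin pθ) (Fin pθ) ℝ) + Bᵀ * A⁻¹ * A⁻¹ * B).mulVec (θ - θtilde)
        + (A⁻¹).trace
        + (((1 : Matrix (Fin pθ) (Fin pθ) ℝ) + Bᵀ * A⁻¹ * A⁻¹ * B)
            * Ktilde.toBlocks₂₂).trace := by
  set M := A⁻¹ * B
  set θhat : Ω → Fin pθ → ℝ := fun ω j => βhat ω (Sum.inr j)
  have hθhatL2 : ∀ j, MemLp (fun ω => θhat ω j) 2 P := fun j => hβhatL2 _
  have hδL2 : ∀ j, MemLp (fun ω => (θ - θhat ω) j) 2 P := fun j =>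
    (memLp_const _).sub (hθhatL2 j)
  have hεCovCentred : ∀ i j, ∫ ω, (ε ω i - 0) * (ε ω j - 0) ∂P = A⁻¹ i j := by
    simpa only [sub_zero] using hεCov
  have hεδ : IndepFun ε (fun ω => θ - θhat ω) P :=
    hIndep.symm.comp (ψ := fun v : Fin pγ ⊕ Fin pθ → ℝ => θ - fun j => v (Sum.inr j))
      measurable_id (by fun_prop)
  have hS : 1 + Bᵀ * A⁻¹ * A⁻¹ * B = 1 + Mᵀ * M := by
    rw [transpose_mul, transpose_nonsing_inv, hA.eq, Matrix.mul_assoc (Bᵀ * A⁻¹)]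
  have hsplit : ∀ ω, Sum.elim (γ ω) θ - βhat ω
      = Sum.elim (ε ω - M *ᵥ (θ - θhat ω)) (θ - θhat ω) := fun ω => by
    ext (i | j)
    · simp only [hγ, mulVec_sub, Pi.sub_apply, Sum.elim_inl, Pi.add_apply, ← mulVec_mulVec, M,
        θhat]
      ring
    · simp [θhat]
  have hεε := integrable_dotProduct_mulVec_s7 hεL2 hεL2 1
  have hεδint := (integrable_dotProduct_mulVec_s7 hεL2 hδL2 M).const_mul 2
  have hδδ := integrable_dotProduct_mulVec_s7 hδL2 hδL2 (1 + Mᵀ * M)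
  simp_rw [hsplit, sumElim_dotProduct_sumElim, sub_mulVec_dotProduct_sub_mulVec_add]
  rw [integral_add ?_ hδδ, integral_sub hεε hεδint, integral_const_mul,
    integral_dotProduct_mulVec_self_s7 (m := 0) hεL2 hεMean hεCovCentred,
    hεδ.integral_dotProduct_mulVec_eq_zero hεL2 hδL2 hεMean,
    integral_const_sub_dotProduct_mulVec_self (m := θtilde) (K := Ktilde.toBlocks₂₂) hθhatL2
      (fun j => hβhatMean _) (fun j k => hβhatCov _ _), hS, zero_dotProduct, one_mul]
  · ring
  · exact hεε.sub hεδint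

/-- The generator squared error entry of Table 2:
E[‖β − β̂‖²] = (θ − θ̃)ᵀ S (θ − θ̃) + tr(A⁻¹) + tr(S K̃_{θθ}),
where S = I + Bᵀ A⁻¹ A⁻¹ B, β̂ = (γ̂, θ̂) has mean β̃ = (γ̃, θ̃) and covariance
whose θ-block is K̃_{θθ}, and γ = γ̂ + A⁻¹ B (θ̂ − θ) + ε with ε independent of β̂,
mean 0, covariance A⁻¹; the squared Euclidean norm is written as the dot
product of a vector with itself. -/
theorem expected_generator_squared_error
    {Ω : Type*} [MeasurableSpace Ω] (P : Measure Ω) [IsProbabilityMeasure P]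
    {pγ pθ : ℕ}
    (A : Matrix (Fin pγ) (Fin pγ) ℝ) (hA : A.IsSymm) (hAdet : IsUnit A.det)
    (B : Matrix (Fin pγ) (Fin pθ) ℝ)
    (θ : Fin pθ → ℝ)
    (βhat : Ω → (Fin pγ ⊕ Fin pθ → ℝ)) (hβhatMeas : Measurable βhat)
    (hβhatL2 : ∀ i, MemLp (fun ω => βhat ω i) 2 P)
    (γtilde : Fin pγ → ℝ) (θtilde : Fin pθ → ℝ)
    (hβhatMean : ∀ i, ∫ ω, βhat ω i ∂P = Sum.elim γtilde θtilde i)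
    (Ktilde : Matrix (Fin pγ ⊕ Fin pθ) (Fin pγ ⊕ Fin pθ) ℝ)
    (hβhatCov : ∀ i j, ∫ ω, (βhat ω i - Sum.elim γtilde θtilde i)
        * (βhat ω j - Sum.elim γtilde θtilde j) ∂P = Ktilde i j)
    (ε : Ω → (Fin pγ → ℝ)) (hεMeas : Measurable ε)
    (hεL2 : ∀ i, MemLp (fun ω => ε ω i) 2 P)
    (hεMean : ∀ i, ∫ ω, ε ω i ∂P = 0)
    (hεCov : ∀ i j, ∫ ω, ε ω i * ε ω j ∂P = A⁻¹ i j)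
    (hIndep : IndepFun βhat ε P)
    (γ : Ω → (Fin pγ → ℝ))
    (hγ : ∀ ω, γ ω = (fun i => βhat ω (Sum.inl i))
        + A⁻¹.mulVec (B.mulVec ((fun j => βhat ω (Sum.inr j)) - θ)) + ε ω) :
    ∫ ω, (Sum.elim (γ ω) θ - βhat ω) ⬝ᵥ (Sum.elim (γ ω) θ - βhat ω) ∂P
      = (θ - θtilde) ⬝ᵥ
          ((1 : Matrix (Fin pθ) (Fin pθ) ℝ) + Bᵀ * A⁻¹ * A⁻¹ * B).mulVec (θ - θtilde)
        + (A⁻¹).trace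
        + (((1 : Matrix (Fin pθ) (Fin pθ) ℝ) + Bᵀ * A⁻¹ * A⁻¹ * B)
            * Ktilde.toBlocks₂₂).trace :=
  expected_generator_squared_error_general P A hA B θ βhat hβhatL2 γtilde θtilde hβhatMean Ktilde
    hβhatCov ε hεL2 hεMean hεCov hIndep γ hγ
end

section
/- Let n, p, q be positive integers, let t : Fin n → Fin q be a surjective map (assigning each of the n runs to one of q treatments), let X be an n × p real matrix with XᵀX invertible whose rows are constant on treatment classes (i.e. t(i) = t(j) implies row i of X equals row j of X), and let Z be the n × q indicator matrix with Z i l = 1 if t(i) = l and 0 otherwise. Then ZᵀZ is invertible and tr(H_X H_Z) = p, where H_X = X (XᵀX)⁻¹ Xᵀ and H_Z = Z (ZᵀZ)⁻¹ Zᵀ. -/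
/-!
Rows of `X` constant on treatment classes means `X = Z W`, so the column space of `X` lies in
that of `Z` and `H_Z X = X`. Hence `tr (H_X H_Z) = tr (H_Z H_X) = tr H_X = tr ((XᵀX)⁻¹ XᵀX) = p`.
Invertibility of `ZᵀZ` holds because it is the diagonal matrix of the (nonzero) class sizes.
-/

open Matrix

namespace Matrix

variable {ι κ m R : Type*}

noncomputable def hatMatrix [Fintype ι] [Fintype κ] [DecidableEq κ] [CommRing R]
    (A : Matrix ι κ R) : Matrix ι ι R :=
  A * (Aᵀ * A)⁻¹ * Aᵀ

def indicatorMatrix [DecidableEq κ] (R : Type*) [Zero R] [One R] (t : ι → κ) : Matrix ι κ R :=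
  of fun i l => if t i = l then 1 else 0

section Indicator

variable [DecidableEq κ] (t : ι → κ)

theorem transpose_indicatorMatrix_mul_self [Fintype ι] [Semiring R] :
    (indicatorMatrix R t)ᵀ * indicatorMatrix R t =
      diagonal fun l => ((Finset.univ.filter fun i => t i = l).card : R) := by
  ext l l'
  simp only [mul_apply, transpose_apply, indicatorMatrix, of_apply, diagonal_apply,
    mul_ite, mul_one, mul_zero]
  split_ifs with h
  · subst h
    simp [Finset.sum_ite, Finset.filter_filter]
  · refine Finset.sum_eq_zero fun i _ => ?_
    split_ifs <;> simp_all

theorem isUnit_det_transpose_indicatorMatrix_mul_self [Fintype ι] [Fintype κ] {K : Type*}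
    [Field K] [CharZero K] (ht : Function.Surjective t) :
    IsUnit ((indicatorMatrix K t)ᵀ * indicatorMatrix K t).det := by
  rw [transpose_indicatorMatrix_mul_self, det_diagonal, isUnit_iff_ne_zero,
    Finset.prod_ne_zero_iff]
  intro l _
  obtain ⟨i, rfl⟩ := ht l
  exact Nat.cast_ne_zero.mpr (Finset.card_ne_zero_of_mem (a := i) (by simp))

theorem indicatorMatrix_mul_submatrix_surjInv [Fintype κ] [Semiring R]
    (ht : Function.Surjective t) (X : Matrix ι m R) (hrow : ∀ i j, t i = t j → X i = X j) :
    indicatorMatrix R t * X.submatrix (Function.surjInv ht) id = X := by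
  ext i j
  rw [mul_apply, Finset.sum_eq_single (t i)]
  · simp [indicatorMatrix, hrow _ _ (Function.surjInv_eq ht (t i))]
  · intro l _ hl
    simp [indicatorMatrix, Ne.symm hl]
  · simp

end Indicator

section Hat

variable [Fintype ι] [Fintype κ] [DecidableEq κ] [CommRing R]

theorem hatMatrix_mul_of_eq_mul {A : Matrix ι κ R} (hA : IsUnit (Aᵀ * A).det)
    (W : Matrix κ m R) : hatMatrix A * (A * W) = A * W := by
  rw [hatMatrix, Matrix.mul_assoc, Matrix.mul_assoc, ← Matrix.mul_assoc Aᵀ,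
    ← Matrix.mul_assoc _ (Aᵀ * A), nonsing_inv_mul _ hA, Matrix.one_mul]

theorem trace_hatMatrix [Fintype m] [DecidableEq m] {A : Matrix ι m R}
    (hA : IsUnit (Aᵀ * A).det) : (hatMatrix A).trace = Fintype.card m := by
  rw [hatMatrix, trace_mul_comm, ← Matrix.mul_assoc, mul_nonsing_inv _ hA, trace_one]

theorem trace_hatMatrix_mul_hatMatrix_of_eq_mul [Fintype m] [DecidableEq m]
    {A : Matrix ι κ R} {B : Matrix ι m R} (hA : IsUnit (Aᵀ * A).det)
    (hB : IsUnit (Bᵀ * B).det) {W : Matrix κ m R} (hBW : B = A * W) :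
    (hatMatrix B * hatMatrix A).trace = Fintype.card m := by
  have hHAB : hatMatrix A * B = B := hBW ▸ hatMatrix_mul_of_eq_mul hA W
  have hHAHB : hatMatrix A * hatMatrix B = hatMatrix B := by
    change hatMatrix A * (B * (Bᵀ * B)⁻¹ * Bᵀ) = B * (Bᵀ * B)⁻¹ * Bᵀ
    rw [← Matrix.mul_assoc, ← Matrix.mul_assoc, hHAB]
  rw [trace_mul_comm, hHAHB, trace_hatMatrix hB]

end Hat

end Matrix

theorem trace_hat_matrices_eq_p_general
    {n p q : ℕ}
    (t : Fin n → Fin q) (ht : Function.Surjective t)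
    (X : Matrix (Fin n) (Fin p) ℝ) (hX : IsUnit (Xᵀ * X).det)
    (hrow : ∀ i j, t i = t j → X i = X j)
    (Z : Matrix (Fin n) (Fin q) ℝ)
    (hZ : ∀ i l, Z i l = if t i = l then 1 else 0) :
    IsUnit (Zᵀ * Z).det ∧
      ((X * (Xᵀ * X)⁻¹ * Xᵀ) * (Z * (Zᵀ * Z)⁻¹ * Zᵀ)).trace = (p : ℝ) := by
  obtain rfl : Z = indicatorMatrix ℝ t := Matrix.ext hZ
  have hZdet := isUnit_det_transpose_indicatorMatrix_mul_self (K := ℝ) t ht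
  refine ⟨hZdet, ?_⟩
  simpa [hatMatrix] using trace_hatMatrix_mul_hatMatrix_of_eq_mul hZdet hX
    (indicatorMatrix_mul_submatrix_surjInv t ht X hrow).symm

/-- Section SM5: for the fitted model matrix X with rows constant on treatment
classes and the full-treatment indicator matrix Z, ZᵀZ is invertible and
tr(H_X H_Z) = p, where H_X and H_Z are the corresponding hat matrices. -/
theorem trace_hat_matrices_eq_p
    {n p q : ℕ} (hn : 0 < n) (hp : 0 < p) (hq : 0 < q)
    (t : Fin n → Fin q) (ht : Function.Surjective t)
    (X : Matrix (Fin n) (Fin p) ℝ) (hX : IsUnit (Xᵀ * X).det)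
    (hrow : ∀ i j, t i = t j → X i = X j)
    (Z : Matrix (Fin n) (Fin q) ℝ)
    (hZ : ∀ i l, Z i l = if t i = l then 1 else 0) :
    IsUnit (Zᵀ * Z).det ∧
      ((X * (Xᵀ * X)⁻¹ * Xᵀ) * (Z * (Zᵀ * Z)⁻¹ * Zᵀ)).trace = (p : ℝ) :=
  trace_hat_matrices_eq_p_general t ht X hX hrow Z hZ
end
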